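/- Fix b ∈ ℝ and λ ≥ 0 (an eigenvalue λ_l), and for p = ε + iθ with ε>0 let z₀(p) be the unique root with Re z₀ < 0 of z³ − (λ−b)z + p = 0. Then the limit r₀(θ) = lim_{ε→0⁺} z₀(ε+iθ) = p(θ) + iq(θ) exists, r₀ is continuous in θ, r₀(−θ) is the complex conjugate of r₀(θ), and |r₀(θ)| ≤ c(|θ|^{1/3} + λ^{1/2} + |b|^{1/2}) for an absolute constant c>0. If λ ≥ b then p(θ) ≤ −c₀(|θ|^{1/3} + (λ−b)^{1/2}) for an absolute constant c₀>0. If λ < b then, with φ(ξ)=ξ³−bξ+λξ and κ(θ) its inverse on the branch |ξ| ≥ √((b−λ)/3): for |θ| ≥ 2((b−λ)/3)^{3/2} one has p(θ) ≤ −c₀(|κ(θ)| − 2√((b−λ)/3)), while for |θ| < 2((b−λ)/3)^{3/2} one has p(θ)=0, |q(θ)| ≤ √((b−λ)/3), and q(θ) = φ^{−1}(θ). -/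

import Mathlib

noncomputable section

open MeasureTheory Real Set Filter Topology
open scoped ENNReal NNReal

namespace ZK

/-! ### Geometry -/

/-- The half-strip `Σ₊ = {(x,y) : x > 0, 0 < y < L}`. -/
def halfStrip (L : ℝ) : Set (ℝ × ℝ) := {p | 0 < p.1 ∧ p.2 ∈ Ioo 0 L}

/-- The full strip `Σ = ℝ × (0,L)`. -/
def strip (L : ℝ) : Set (ℝ × ℝ) := {p | p.2 ∈ Ioo 0 L}

/-- `B_T = (0,T) × (0,L)`. -/
def bdryT (T L : ℝ) : Set (ℝ × ℝ) := Ioo 0 T ×ˢ Ioo 0 L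

/-! ### Admissible weight functions -/

structure AdmissibleWeight (ρ : ℝ → ℝ) : Prop where
  smooth : ContDiff ℝ (⊤ : ℕ∞) ρ
  pos : ∀ x : ℝ, 0 ≤ x → 0 < ρ x
  derivBound : ∀ j : ℕ, ∃ c : ℝ, ∀ x : ℝ, 0 ≤ x → |iteratedDeriv j ρ x| ≤ c * ρ x

/-! ### Partial derivatives -/

def pdx (f : ℝ × ℝ → ℝ) : ℝ × ℝ → ℝ := fun p => fderiv ℝ f p (1, 0)
def pdy (f : ℝ × ℝ → ℝ) : ℝ × ℝ → ℝ := fun p => fderiv ℝ f p (0, 1)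
/-- `pd a b f = ∂_x^a ∂_y^b f`. -/
def pd (a b : ℕ) (f : ℝ × ℝ → ℝ) : ℝ × ℝ → ℝ := pdx^[a] (pdy^[b] f)

def pt3 (f : ℝ × ℝ × ℝ → ℝ) : ℝ × ℝ × ℝ → ℝ := fun q => fderiv ℝ f q (1, 0, 0)
def px3 (f : ℝ × ℝ × ℝ → ℝ) : ℝ × ℝ × ℝ → ℝ := fun q => fderiv ℝ f q (0, 1, 0)
def py3 (f : ℝ × ℝ × ℝ → ℝ) : ℝ × ℝ × ℝ → ℝ := fun q => fderiv ℝ f q (0, 0, 1)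

/-! ### Boundary conditions in `y` -/

inductive BC where
  | dirichlet | neumann | mixed | periodic

/-- The boundary conditions at `y = 0, L` satisfied by the smooth dense class, per case. -/
def bcOK (L : ℝ) (bc : BC) (φ : ℝ × ℝ → ℝ) : Prop :=
  match bc with
  | .dirichlet => ∀ (m : ℕ) (x : ℝ), pd 0 (2*m) φ (x, 0) = 0 ∧ pd 0 (2*m) φ (x, L) = 0
  | .neumann   => ∀ (m : ℕ) (x : ℝ), pd 0 (2*m+1) φ (x, 0) = 0 ∧ pd 0 (2*m+1) φ (x, L) = 0
  | .mixed     => ∀ (m : ℕ) (x : ℝ), pd 0 (2*m) φ (x, 0) = 0 ∧ pd 0 (2*m+1) φ (x, L) = 0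
  | .periodic  => ∀ (m : ℕ) (x : ℝ), pd 0 m φ (x, 0) = pd 0 m φ (x, L)

/-- The class `S̃(Σ̄)` : smooth, rapidly decaying in the first variable together with all
derivatives, satisfying the boundary conditions of the given case. (The same class serves
for `S̃(B̄)` with the first variable interpreted as time.) -/
structure SchwartzLike (L : ℝ) (bc : BC) (φ : ℝ × ℝ → ℝ) : Prop where
  smooth : ContDiff ℝ (⊤ : ℕ∞) φ
  decay : ∀ n a b : ℕ, ∃ c : ℝ, ∀ p : ℝ × ℝ, (1 + |p.1|)^n * |pd a b φ p| ≤ c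
  bcond : bcOK L bc φ

/-! ### Weighted `L²` spaces on the half-strip -/

/-- Multiplication by `ρ^{1/2}(x)`. -/
def wfun (ρ : ℝ → ℝ) (φ : ℝ × ℝ → ℝ) : ℝ × ℝ → ℝ := fun p => φ p * Real.sqrt (ρ p.1)

def L2wENorm (L : ℝ) (ρ : ℝ → ℝ) (φ : ℝ × ℝ → ℝ) : ℝ≥0∞ :=
  eLpNorm (wfun ρ φ) 2 (volume.restrict (halfStrip L))

def MemL2w (L : ℝ) (ρ : ℝ → ℝ) (φ : ℝ × ℝ → ℝ) : Prop :=
  MemLp (wfun ρ φ) 2 (volume.restrict (halfStrip L))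

/-! ### Weak derivatives on the half-strip -/

/-- Smooth test functions compactly supported inside the (open) half-strip. -/
def TestCc (L : ℝ) (ψ : ℝ × ℝ → ℝ) : Prop :=
  ContDiff ℝ (⊤ : ℕ∞) ψ ∧ HasCompactSupport ψ ∧ tsupport ψ ⊆ halfStrip L

/-- `g = ∂_x^a ∂_y^b φ` in the weak (distributional) sense on `Σ₊`. -/
def IsWeakPD (L : ℝ) (a b : ℕ) (φ g : ℝ × ℝ → ℝ) : Prop :=
  ∀ ψ : ℝ × ℝ → ℝ, TestCc L ψ →
    ∫ p in halfStrip L, φ p * pd a b ψ p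
      = (-1 : ℝ)^(a+b) * ∫ p in halfStrip L, g p * ψ p

/-- Weighted `L²` norm of the weak derivative `∂_x^a ∂_y^b φ` (`⊤` if no weak derivative
exists; weak derivatives are a.e. unique so this is unambiguous). -/
def wpdENorm (L : ℝ) (a b : ℕ) (ρ : ℝ → ℝ) (φ : ℝ × ℝ → ℝ) : ℝ≥0∞ :=
  if a = 0 ∧ b = 0 then L2wENorm L ρ φ
  else ⨅ g : {g : ℝ × ℝ → ℝ // IsWeakPD L a b φ g}, L2wENorm L ρ g.1

/-- Weighted Sobolev `H^{k,ρ}(Σ₊)` norm. -/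
def HkwENorm (L : ℝ) (k : ℕ) (ρ : ℝ → ℝ) (φ : ℝ × ℝ → ℝ) : ℝ≥0∞ :=
  ∑ a ∈ Finset.range (k+1), ∑ b ∈ Finset.range (k+1),
    if a + b ≤ k then wpdENorm L a b ρ φ else 0

/-- Weighted anisotropic `H^{(0,k),ρ}(Σ₊)` norm (only `y`-derivatives). -/
def H0kwENorm (L : ℝ) (k : ℕ) (ρ : ℝ → ℝ) (φ : ℝ × ℝ → ℝ) : ℝ≥0∞ :=
  ∑ m ∈ Finset.range (k+1), wpdENorm L 0 m ρ φ

/-! ### The spaces `H̃^k`, `H̃^k_+` and weighted versions -/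

/-- `Φ ∈ H̃^k` : `Φ` is a limit in `H^k(Σ)` of functions from `S̃(Σ̄)`. -/
def MemHtilde (L : ℝ) (bc : BC) (k : ℕ) (Φ : ℝ × ℝ → ℝ) : Prop :=
  ∃ g : ℕ → ℝ × ℝ → ℝ,
    (∀ n, SchwartzLike L bc (g n)) ∧
    Tendsto (fun n => eLpNorm (fun p => g n p - Φ p) 2 (volume.restrict (strip L)))
      atTop (𝓝 0) ∧
    ∀ a b : ℕ, a + b ≤ k → ∃ h : ℝ × ℝ → ℝ,
      Tendsto (fun n => eLpNorm (fun p => pd a b (g n) p - h p) 2 (volume.restrict (strip L)))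
        atTop (𝓝 0)

/-- `φ ∈ H̃^k_+` : restriction of an element of `H̃^k` to the half-strip. -/
def MemHtildePlus (L : ℝ) (bc : BC) (k : ℕ) (φ : ℝ × ℝ → ℝ) : Prop :=
  ∃ Φ : ℝ × ℝ → ℝ, MemHtilde L bc k Φ ∧ EqOn Φ φ (halfStrip L)

/-- `φ ∈ H̃^{k,ρ(x)}_+`, i.e. `φ ρ^{1/2} ∈ H̃^k_+`. -/
def MemHtildePlusW (L : ℝ) (bc : BC) (k : ℕ) (ρ : ℝ → ℝ) (φ : ℝ × ℝ → ℝ) : Prop :=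
  MemHtildePlus L bc k (wfun ρ φ)

/-- `Φ` in the closure of `S̃(Σ̄)` in the anisotropic norm `Σ_{m≤k} ‖∂_y^m ⬝‖_{L²(Σ)}`. -/
def MemHtilde0 (L : ℝ) (bc : BC) (k : ℕ) (Φ : ℝ × ℝ → ℝ) : Prop :=
  ∃ g : ℕ → ℝ × ℝ → ℝ,
    (∀ n, SchwartzLike L bc (g n)) ∧
    Tendsto (fun n => eLpNorm (fun p => g n p - Φ p) 2 (volume.restrict (strip L)))
      atTop (𝓝 0) ∧
    ∀ m : ℕ, m ≤ k → ∃ h : ℝ × ℝ → ℝ,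
      Tendsto (fun n => eLpNorm (fun p => pd 0 m (g n) p - h p) 2 (volume.restrict (strip L)))
        atTop (𝓝 0)

def MemHtilde0Plus (L : ℝ) (bc : BC) (k : ℕ) (φ : ℝ × ℝ → ℝ) : Prop :=
  ∃ Φ : ℝ × ℝ → ℝ, MemHtilde0 L bc k Φ ∧ EqOn Φ φ (halfStrip L)

def MemHtilde0PlusW (L : ℝ) (bc : BC) (k : ℕ) (ρ : ℝ → ℝ) (φ : ℝ × ℝ → ℝ) : Prop :=
  MemHtilde0Plus L bc k (wfun ρ φ)

/-! ### Weak time derivatives -/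

def TestCc1 (T : ℝ) (χ : ℝ → ℝ) : Prop :=
  ContDiff ℝ (⊤ : ℕ∞) χ ∧ HasCompactSupport χ ∧ tsupport χ ⊆ Ioo 0 T

/-- `v = ∂_t u` in the weak sense on `(0,T) × Σ₊`. -/
def IsWeakTimeDeriv (L T : ℝ) (u v : ℝ → ℝ × ℝ → ℝ) : Prop :=
  ∀ χ : ℝ → ℝ, TestCc1 T χ → ∀ ψ : ℝ × ℝ → ℝ, TestCc L ψ →
    ∫ t in Ioo 0 T, (∫ p in halfStrip L, u t p * ψ p) * deriv χ t
      = - ∫ t in Ioo 0 T, (∫ p in halfStrip L, v t p * ψ p) * χ t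

def IsIterWeakTimeDeriv (L T : ℝ) : ℕ → (ℝ → ℝ × ℝ → ℝ) → (ℝ → ℝ × ℝ → ℝ) → Prop
  | 0, u, v => v = u
  | j+1, u, v => ∃ w, IsIterWeakTimeDeriv L T j u w ∧ IsWeakTimeDeriv L T w v

/-! ### The spaces `X_w^{k,ρ(x)}(Π_T⁺)` and `X^{k,ρ(x)}(Π_T⁺)` -/

/-- A single level: `v ∈ C_w([0,T]; H̃^{k,ρ}_+) ∩ L²(0,T; H̃^{k+1,ρ'}_+)`
(weak continuity encoded as boundedness plus continuity of pairings against test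
functions). -/
def MemXwj (L T : ℝ) (bc : BC) (k : ℕ) (ρ : ℝ → ℝ) (v : ℝ → ℝ × ℝ → ℝ) : Prop :=
  (∀ t ∈ Icc (0:ℝ) T, MemHtildePlusW L bc k ρ (v t)) ∧
  (⨆ t ∈ Icc (0:ℝ) T, HkwENorm L k ρ (v t)) ≠ ⊤ ∧
  (∀ ψ : ℝ × ℝ → ℝ, TestCc L ψ →
     ContinuousOn (fun t => ∫ p in halfStrip L, v t p * ψ p) (Icc 0 T)) ∧
  (∀ᵐ t ∂(volume.restrict (Ioo 0 T)), MemHtildePlusW L bc (k+1) (deriv ρ) (v t)) ∧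
  (∫⁻ t in Ioo 0 T, (HkwENorm L (k+1) (deriv ρ) (v t))^2) ≠ ⊤

/-- A single level with strong continuity in time:
`v ∈ C([0,T]; H̃^{k,ρ}_+) ∩ L²(0,T; H̃^{k+1,ρ'}_+)`. -/
def MemXsj (L T : ℝ) (bc : BC) (k : ℕ) (ρ : ℝ → ℝ) (v : ℝ → ℝ × ℝ → ℝ) : Prop :=
  (∀ t ∈ Icc (0:ℝ) T, MemHtildePlusW L bc k ρ (v t)) ∧
  (⨆ t ∈ Icc (0:ℝ) T, HkwENorm L k ρ (v t)) ≠ ⊤ ∧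
  (∀ t₀ ∈ Icc (0:ℝ) T,
     Tendsto (fun t => HkwENorm L k ρ (fun p => v t p - v t₀ p))
       (𝓝[Icc (0:ℝ) T] t₀) (𝓝 0)) ∧
  (∀ᵐ t ∂(volume.restrict (Ioo 0 T)), MemHtildePlusW L bc (k+1) (deriv ρ) (v t)) ∧
  (∫⁻ t in Ioo 0 T, (HkwENorm L (k+1) (deriv ρ) (v t))^2) ≠ ⊤

/-- `u ∈ X_w^{k,ρ(x)}(Π_T⁺)`. -/
def MemXw (L T : ℝ) (bc : BC) (k : ℕ) (ρ : ℝ → ℝ) (u : ℝ → ℝ × ℝ → ℝ) : Prop :=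
  ∀ j : ℕ, 3*j ≤ k → ∃ v, IsIterWeakTimeDeriv L T j u v ∧ MemXwj L T bc (k - 3*j) ρ v

/-- `u ∈ X^{k,ρ(x)}(Π_T⁺)` (strong continuity in time). -/
def MemXs (L T : ℝ) (bc : BC) (k : ℕ) (ρ : ℝ → ℝ) (u : ℝ → ℝ × ℝ → ℝ) : Prop :=
  ∀ j : ℕ, 3*j ≤ k → ∃ v, IsIterWeakTimeDeriv L T j u v ∧ MemXsj L T bc (k - 3*j) ρ v

def XjENorm (L T : ℝ) (k : ℕ) (ρ : ℝ → ℝ) (v : ℝ → ℝ × ℝ → ℝ) : ℝ≥0∞ :=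
  (⨆ t ∈ Icc (0:ℝ) T, HkwENorm L k ρ (v t))
    + (∫⁻ t in Ioo 0 T, (HkwENorm L (k+1) (deriv ρ) (v t))^2) ^ (1/2 : ℝ)

/-- The norm of `X_w^{k,ρ(x)}(Π_T⁺)` (and of `X^{k,ρ(x)}(Π_T⁺)`). -/
def XENorm (L T : ℝ) (k : ℕ) (ρ : ℝ → ℝ) (u : ℝ → ℝ × ℝ → ℝ) : ℝ≥0∞ :=
  ∑ j ∈ Finset.range (k/3 + 1),
    ⨅ v : {v : ℝ → ℝ × ℝ → ℝ // IsIterWeakTimeDeriv L T j u v},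
      XjENorm L T (k - 3*j) ρ v.1

/-! ### Time-integrated norms -/

def L1tL2wENorm (L T : ℝ) (ρ : ℝ → ℝ) (f : ℝ → ℝ × ℝ → ℝ) : ℝ≥0∞ :=
  ∫⁻ t in Ioo 0 T, L2wENorm L ρ (f t)

def MemL1tL2w (L T : ℝ) (ρ : ℝ → ℝ) (f : ℝ → ℝ × ℝ → ℝ) : Prop :=
  (∀ᵐ t ∂(volume.restrict (Ioo 0 T)), MemL2w L ρ (f t)) ∧ L1tL2wENorm L T ρ f ≠ ⊤

def L2tL2wENorm (L T : ℝ) (ρ : ℝ → ℝ) (f : ℝ → ℝ × ℝ → ℝ) : ℝ≥0∞ :=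
  (∫⁻ t in Ioo 0 T, (L2wENorm L ρ (f t))^2) ^ (1/2 : ℝ)

def MemL2tL2w (L T : ℝ) (ρ : ℝ → ℝ) (f : ℝ → ℝ × ℝ → ℝ) : Prop :=
  (∀ᵐ t ∂(volume.restrict (Ioo 0 T)), MemL2w L ρ (f t)) ∧ L2tL2wENorm L T ρ f ≠ ⊤

def L2tHkwENorm (L T : ℝ) (k : ℕ) (ρ : ℝ → ℝ) (f : ℝ → ℝ × ℝ → ℝ) : ℝ≥0∞ :=
  (∫⁻ t in Ioo 0 T, (HkwENorm L k ρ (f t))^2) ^ (1/2 : ℝ)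

def MemL2tHkw (L T : ℝ) (bc : BC) (k : ℕ) (ρ : ℝ → ℝ) (f : ℝ → ℝ × ℝ → ℝ) : Prop :=
  (∀ᵐ t ∂(volume.restrict (Ioo 0 T)), MemHtildePlusW L bc k ρ (f t)) ∧
    L2tHkwENorm L T k ρ f ≠ ⊤

def L1tH0kwENorm (L T : ℝ) (k : ℕ) (ρ : ℝ → ℝ) (f : ℝ → ℝ × ℝ → ℝ) : ℝ≥0∞ :=
  ∫⁻ t in Ioo 0 T, H0kwENorm L k ρ (f t)

def MemL1tH0kw (L T : ℝ) (bc : BC) (k : ℕ) (ρ : ℝ → ℝ) (f : ℝ → ℝ × ℝ → ℝ) : Prop :=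
  (∀ᵐ t ∂(volume.restrict (Ioo 0 T)), MemHtilde0PlusW L bc k ρ (f t)) ∧
    L1tH0kwENorm L T k ρ f ≠ ⊤

/-! ### Test functions and the weak formulation of the Zakharov–Kuznetsov problem -/

def bcOK3 (L : ℝ) (bc : BC) (Φ : ℝ × ℝ × ℝ → ℝ) : Prop :=
  ∀ t : ℝ, bcOK L bc (fun p => Φ (t, p.1, p.2))

/-- Test functions for Definition 1.1: smooth (compactly supported) functions with
`Φ|_{t=T} = 0`, `Φ|_{x=0} = Φ_x|_{x=0} = 0` and the boundary conditions in `y`. -/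
structure TestFun (L T : ℝ) (bc : BC) (Φ : ℝ × ℝ × ℝ → ℝ) : Prop where
  smooth : ContDiff ℝ (⊤ : ℕ∞) Φ
  compSupp : HasCompactSupport Φ
  atT : ∀ x y : ℝ, Φ (T, x, y) = 0
  atX0 : ∀ t y : ℝ, Φ (t, 0, y) = 0
  atX0x : ∀ t y : ℝ, px3 Φ (t, 0, y) = 0
  bc3 : bcOK3 L bc Φ

/-- Test functions with only `Φ|_{x=0} = 0` at the lateral boundary (used in Lemma 2.12). -/
structure TestFun0 (L T : ℝ) (bc : BC) (Φ : ℝ × ℝ × ℝ → ℝ) : Prop where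
  smooth : ContDiff ℝ (⊤ : ℕ∞) Φ
  compSupp : HasCompactSupport Φ
  atT : ∀ x y : ℝ, Φ (T, x, y) = 0
  atX0 : ∀ t y : ℝ, Φ (t, 0, y) = 0
  bc3 : bcOK3 L bc Φ

/-- The integral identity of Definition 1.1 (nonlinear ZK equation). -/
def zkIntegral (L T b : ℝ) (u f : ℝ → ℝ × ℝ → ℝ) (u₀ μ : ℝ × ℝ → ℝ)
    (Φ : ℝ × ℝ × ℝ → ℝ) : ℝ :=
  (∫ t in Ioo 0 T, ∫ p in halfStrip L,
      (u t p * (pt3 Φ (t, p.1, p.2) + b * px3 Φ (t, p.1, p.2)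
          + px3 (px3 (px3 Φ)) (t, p.1, p.2) + px3 (py3 (py3 Φ)) (t, p.1, p.2))
        + (1/2) * (u t p)^2 * px3 Φ (t, p.1, p.2) + f t p * Φ (t, p.1, p.2)))
    + (∫ p in halfStrip L, u₀ p * Φ (0, p.1, p.2))
    + (∫ q in bdryT T L, μ q * px3 (px3 Φ) (q.1, 0, q.2))

/-- Weak solution of the initial-boundary value problem for the ZK equation. -/
def IsWeakSolution (L T b : ℝ) (bc : BC) (u : ℝ → ℝ × ℝ → ℝ) (u₀ μ : ℝ × ℝ → ℝ)
    (f : ℝ → ℝ × ℝ → ℝ) : Prop :=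
  AEStronglyMeasurable (Function.uncurry u)
      ((volume.restrict (Ioo 0 T)).prod (volume.restrict (halfStrip L))) ∧
  (∃ C : ℝ≥0∞, C ≠ ⊤ ∧ ∀ᵐ t ∂(volume.restrict (Ioo 0 T)),
      eLpNorm (u t) 2 (volume.restrict (halfStrip L)) ≤ C) ∧
  ∀ Φ : ℝ × ℝ × ℝ → ℝ, TestFun L T bc Φ → zkIntegral L T b u f u₀ μ Φ = 0

/-- The integral identity for the linear equation. -/
def zkIntegralLin (L T b : ℝ) (u f : ℝ → ℝ × ℝ → ℝ) (u₀ μ : ℝ × ℝ → ℝ)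
    (Φ : ℝ × ℝ × ℝ → ℝ) : ℝ :=
  (∫ t in Ioo 0 T, ∫ p in halfStrip L,
      (u t p * (pt3 Φ (t, p.1, p.2) + b * px3 Φ (t, p.1, p.2)
          + px3 (px3 (px3 Φ)) (t, p.1, p.2) + px3 (py3 (py3 Φ)) (t, p.1, p.2))
        + f t p * Φ (t, p.1, p.2)))
    + (∫ p in halfStrip L, u₀ p * Φ (0, p.1, p.2))
    + (∫ q in bdryT T L, μ q * px3 (px3 Φ) (q.1, 0, q.2))

/-- Weak solution of the initial-boundary value problem for the linear equation. -/
def IsWeakSolutionLin (L T b : ℝ) (bc : BC) (u : ℝ → ℝ × ℝ → ℝ) (u₀ μ : ℝ × ℝ → ℝ)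
    (f : ℝ → ℝ × ℝ → ℝ) : Prop :=
  ∀ Φ : ℝ × ℝ × ℝ → ℝ, TestFun L T bc Φ → zkIntegralLin L T b u f u₀ μ Φ = 0

/-! ### The quantity `λ⁺` -/

def lambdaPlus (L T : ℝ) (w : ℝ → ℝ × ℝ → ℝ) : ℝ≥0∞ :=
  ⨆ x₀ : {x : ℝ // 0 ≤ x},
    ∫⁻ t in Ioo 0 T, ∫⁻ p in Ioo (x₀ : ℝ) ((x₀ : ℝ) + 1) ×ˢ Ioo (0:ℝ) L,
      ENNReal.ofReal ((w t p)^2)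

/-- `λ⁺(|Du|;T) < ∞`. -/
def LambdaDuFinite (L T : ℝ) (u : ℝ → ℝ × ℝ → ℝ) : Prop :=
  ∃ gx gy : ℝ → ℝ × ℝ → ℝ,
    (∀ᵐ t ∂(volume.restrict (Ioo 0 T)),
      IsWeakPD L 1 0 (u t) (gx t) ∧ IsWeakPD L 0 1 (u t) (gy t)) ∧
    lambdaPlus L T (fun t p => Real.sqrt ((gx t p)^2 + (gy t p)^2)) ≠ ⊤

/-- `λ⁺(|D²u|;T) < ∞`. -/
def LambdaD2uFinite (L T : ℝ) (u : ℝ → ℝ × ℝ → ℝ) : Prop :=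
  ∃ g : ℕ → ℕ → ℝ → ℝ × ℝ → ℝ,
    (∀ a b : ℕ, a + b ≤ 2 →
      ∀ᵐ t ∂(volume.restrict (Ioo 0 T)), IsWeakPD L a b (u t) (g a b t)) ∧
    lambdaPlus L T (fun t p => Real.sqrt (∑ a ∈ Finset.range 3, ∑ b ∈ Finset.range 3,
      if a + b ≤ 2 then (g a b t p)^2 else 0)) ≠ ⊤

/-! ### Eigenfunctions in `y` and anisotropic norms -/

def eigenBCOK (L : ℝ) (bc : BC) (g : ℝ → ℝ) : Prop :=
  match bc with
  | .dirichlet => g 0 = 0 ∧ g L = 0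
  | .neumann   => deriv g 0 = 0 ∧ deriv g L = 0
  | .mixed     => g 0 = 0 ∧ deriv g L = 0
  | .periodic  => g 0 = g L ∧ deriv g 0 = deriv g L

/-- The orthonormal eigen-system of `-d²/dy²` on `[0,L]` with the boundary conditions of
the given case (indexed so that `ψe l` is the paper's `ψ_{l+1}`). -/
structure EigenSystem (L : ℝ) (bc : BC) (ψe : ℕ → ℝ → ℝ) (lam : ℕ → ℝ) : Prop where
  smooth : ∀ l, ContDiff ℝ (⊤ : ℕ∞) (ψe l)
  eigen : ∀ l y, deriv (deriv (ψe l)) y = - lam l * ψe l y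
  ortho : ∀ l m, (∫ y in Ioo 0 L, ψe l y * ψe m y) = if l = m then (1:ℝ) else 0
  complete : ∀ g : ℝ → ℝ, MemLp g 2 (volume.restrict (Ioo 0 L)) →
    (∀ l, (∫ y in Ioo 0 L, g y * ψe l y) = 0) →
    (∀ᵐ y ∂(volume.restrict (Ioo 0 L)), g y = 0)
  bcond : ∀ l, eigenBCOK L bc (ψe l)

/-- Fourier coefficients `μ̂(θ,l)` of a function on `B = ℝ_t × (0,L)`. -/
def muHat (L : ℝ) (ψe : ℕ → ℝ → ℝ) (μ : ℝ × ℝ → ℝ) (θ : ℝ) (l : ℕ) : ℂ :=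
  ∫ q in ((univ : Set ℝ) ×ˢ Ioo (0:ℝ) L),
    Complex.exp (-(Complex.I * ((θ * q.1 : ℝ) : ℂ))) * ((ψe l q.2 * μ q : ℝ) : ℂ)

/-- Square of the anisotropic `H̃^{s/3,s}(B)` norm. -/
def anisoENormSq (L : ℝ) (ψe : ℕ → ℝ → ℝ) (s : ℝ) (μ : ℝ × ℝ → ℝ) : ℝ≥0∞ :=
  ∑' l : ℕ, ∫⁻ θ : ℝ,
    ENNReal.ofReal ((|θ| ^ (2/3 : ℝ) + ((l : ℝ) + 1)^2) ^ s
      * ‖muHat L ψe μ θ l‖ ^ 2)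

def anisoENorm (L : ℝ) (ψe : ℕ → ℝ → ℝ) (s : ℝ) (μ : ℝ × ℝ → ℝ) : ℝ≥0∞ :=
  (anisoENormSq L ψe s μ) ^ (1/2 : ℝ)

/-- The restriction norm of `H̃^{s/3,s}(I × (0,L))`. -/
def anisoRestENorm (L : ℝ) (ψe : ℕ → ℝ → ℝ) (s : ℝ) (I : Set ℝ) (μ : ℝ × ℝ → ℝ) : ℝ≥0∞ :=
  ⨅ ν : {ν : ℝ × ℝ → ℝ // EqOn ν μ (I ×ˢ Ioo 0 L)}, anisoENorm L ψe s ν.1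

/-- `μ ∈ H̃^{s/3,s}(B_T)`. -/
def MemAnisoT (L T : ℝ) (ψe : ℕ → ℝ → ℝ) (s : ℝ) (μ : ℝ × ℝ → ℝ) : Prop :=
  anisoRestENorm L ψe s (Ioo 0 T) μ ≠ ⊤

/-! ### `H^s(Σ)` norms via the eigen-expansion, the group `S`, the operator `K`,
and the boundary potential `J` -/

def u0hat (L : ℝ) (ψe : ℕ → ℝ → ℝ) (u₀ : ℝ × ℝ → ℝ) (ξ : ℝ) (l : ℕ) : ℂ :=
  ∫ p in strip L,
    Complex.exp (-(Complex.I * ((ξ * p.1 : ℝ) : ℂ))) * ((ψe l p.2 * u₀ p : ℝ) : ℂ)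

def HsENormSq (L : ℝ) (ψe : ℕ → ℝ → ℝ) (s : ℝ) (u₀ : ℝ × ℝ → ℝ) : ℝ≥0∞ :=
  ∑' l : ℕ, ∫⁻ ξ : ℝ,
    ENNReal.ofReal ((1 + ξ^2 + ((l : ℝ) + 1)^2) ^ s * ‖u0hat L ψe u₀ ξ l‖ ^ 2)

def HsENorm (L : ℝ) (ψe : ℕ → ℝ → ℝ) (s : ℝ) (u₀ : ℝ × ℝ → ℝ) : ℝ≥0∞ :=
  (HsENormSq L ψe s u₀) ^ (1/2 : ℝ)

/-- The restriction norm of `H̃^s_+ = H̃^s(Σ)|_{Σ₊}`. -/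
def HsPlusENorm (L : ℝ) (ψe : ℕ → ℝ → ℝ) (s : ℝ) (φ : ℝ × ℝ → ℝ) : ℝ≥0∞ :=
  ⨅ ν : {ν : ℝ × ℝ → ℝ // EqOn ν φ (halfStrip L)}, HsENorm L ψe s ν.1

/-- The solution group of the linearized equation (defined through the explicit formula,
meaningful for data in `S̃(Σ̄)`). -/
def Sfun (L b : ℝ) (ψe : ℕ → ℝ → ℝ) (lam : ℕ → ℝ) (u₀ : ℝ × ℝ → ℝ)
    (t : ℝ) (p : ℝ × ℝ) : ℝ :=
  (∑' l : ℕ, (1 / (2*π) : ℝ) *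
      (∫ ξ : ℝ, Complex.exp (Complex.I *
          ((t * (ξ^3 - b*ξ + lam l * ξ) + ξ * p.1 : ℝ) : ℂ)) * u0hat L ψe u₀ ξ l)
      * ((ψe l p.2 : ℝ) : ℂ)).re

/-- `K(t,x,y;f) = ∫₀ᵗ S(t-τ,x,y;f(τ,·,·)) dτ`. -/
def Kfun (L b : ℝ) (ψe : ℕ → ℝ → ℝ) (lam : ℕ → ℝ) (f : ℝ → ℝ × ℝ → ℝ)
    (t : ℝ) (p : ℝ × ℝ) : ℝ :=
  ∫ τ in Ioo 0 t, Sfun L b ψe lam (f τ) (t - τ) p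

/-- `r₀(θ,l)` is the limit as `ε → 0⁺` of the unique root with negative real part of
`z³ - (λ_l - b)z + (ε + iθ) = 0`. -/
def IsRootLimit (b : ℝ) (lam : ℕ → ℝ) (r₀ : ℝ → ℕ → ℂ) : Prop :=
  ∀ (θ : ℝ) (l : ℕ),
    (∀ ε : ℝ, 0 < ε →
      ∃! z : ℂ, z^3 - ((lam l - b : ℝ) : ℂ) * z + (((ε : ℝ) : ℂ) + (θ : ℂ) * Complex.I) = 0
        ∧ z.re < 0) ∧
    ∀ Z : ℝ → ℂ,
      (∀ ε : ℝ, 0 < ε →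
        (Z ε)^3 - ((lam l - b : ℝ) : ℂ) * Z ε + (((ε : ℝ) : ℂ) + (θ : ℂ) * Complex.I) = 0
          ∧ (Z ε).re < 0) →
      Tendsto Z (𝓝[>] 0) (𝓝 (r₀ θ l))

/-- The boundary potential `J(t,x,y;μ)` (explicit formula, meaningful for `μ ∈ S̃(B̄)`). -/
def Jfun (L : ℝ) (ψe : ℕ → ℝ → ℝ) (r₀ : ℝ → ℕ → ℂ) (μ : ℝ × ℝ → ℝ)
    (t x y : ℝ) : ℝ :=
  (∑' l : ℕ, (1 / (2*π) : ℝ) *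
      (∫ θ : ℝ, Complex.exp (Complex.I * ((θ * t : ℝ) : ℂ))
          * Complex.exp (r₀ θ l * ((x : ℝ) : ℂ)) * muHat L ψe μ θ l)
      * ((ψe l y : ℝ) : ℂ)).re

/-- Mixed derivatives `∂_t^j ∂_x^a ∂_y^m J`. -/
def JD (L : ℝ) (ψe : ℕ → ℝ → ℝ) (r₀ : ℝ → ℕ → ℂ) (μ : ℝ × ℝ → ℝ)
    (j a m : ℕ) (t x y : ℝ) : ℝ :=
  iteratedDeriv j (fun t' => iteratedDeriv a (fun x' =>
    iteratedDeriv m (fun y' => Jfun L ψe r₀ μ t' x' y') y) x) t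

/-! ### `H^{(-1,0),ρ(x)}_+` norm of `φ_{xxx}` -/

def xxxHm10ENorm (L : ℝ) (ρ : ℝ → ℝ) (φ : ℝ × ℝ → ℝ) : ℝ≥0∞ :=
  ⨅ d : {d : (ℝ × ℝ → ℝ) × (ℝ × ℝ → ℝ) //
      ∀ ψ : ℝ × ℝ → ℝ, TestCc L ψ →
        - ∫ p in halfStrip L, φ p * pd 3 0 ψ p
          = (∫ p in halfStrip L, d.1 p * ψ p) - ∫ p in halfStrip L, d.2 p * pd 1 0 ψ p},
    L2wENorm L ρ d.1.1 + L2wENorm L ρ d.1.2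

/-- The norm of the space `𝔽` of right-hand sides in Theorem 1.3 / Theorem 4.4. -/
def FENorm (L T : ℝ) (ρ : ℝ → ℝ) (f : ℝ → ℝ × ℝ → ℝ) : ℝ≥0∞ :=
  L1tH0kwENorm L T 3 ρ f + L2tHkwENorm L T 1 ρ f
    + ⨅ g : {g : ℝ → ℝ × ℝ → ℝ // IsWeakTimeDeriv L T f g}, L1tL2wENorm L T ρ g.1

/-- Membership in the space `𝔽`. -/
def MemF (L T : ℝ) (bc : BC) (ρ : ℝ → ℝ) (f : ℝ → ℝ × ℝ → ℝ) : Prop :=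
  MemL1tH0kw L T bc 3 ρ f ∧ MemL2tHkw L T bc 1 ρ f ∧
    ∃ g, IsWeakTimeDeriv L T f g ∧ MemL1tL2w L T ρ g


section Statement13Aux
open Polynomial

namespace S13


noncomputable def mm (a : ℝ) : ℝ := Real.sqrt (-a/3)

noncomputable def phi (a ξ : ℝ) : ℝ := ξ^3 + a*ξ

lemma mm_nonneg (a : ℝ) : 0 ≤ mm a := Real.sqrt_nonneg _

lemma mm_cases (a : ℝ) : (0 ≤ a ∧ mm a = 0) ∨ (a ≤ 0 ∧ a = -3*(mm a)^2) := by
  rcases le_or_gt a 0 with h | h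
  · have h2 : (mm a)^2 = -a/3 := Real.sq_sqrt (by linarith)
    exact Or.inr ⟨h, by linarith⟩
  · refine Or.inl ⟨h.le, ?_⟩
    rw [mm]
    exact Real.sqrt_eq_zero'.mpr (by linarith)

lemma mm_sq_le (a : ℝ) : -3*(mm a)^2 ≤ a := by
  rcases mm_cases a with ⟨h, hm⟩ | ⟨h, hm⟩
  · rw [hm]; simpa using h
  · linarith [hm.ge, hm.le]

noncomputable def Psi (a ξ : ℝ) : ℝ :=
  if ξ ≤ 2 * mm a then (if -(2*mm a) ≤ ξ then phi a (-ξ/2) else phi a ξ) else phi a ξ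

lemma phi_junction1 (a : ℝ) : phi a (-(mm a)) = phi a (2*mm a) := by
  rcases mm_cases a with ⟨h, hm⟩ | ⟨h, hm⟩
  · rw [hm]; simp [phi]
  · have h2 : (mm a)^2 = -a/3 := Real.sq_sqrt (by linarith)
    simp only [phi]
    linear_combination (-9*mm a) * h2

lemma phi_junction2 (a : ℝ) : phi a (mm a) = phi a (-(2*mm a)) := by
  rcases mm_cases a with ⟨h, hm⟩ | ⟨h, hm⟩
  · rw [hm]; simp [phi]
  · have h2 : (mm a)^2 = -a/3 := Real.sq_sqrt (by linarith)
    simp only [phi]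
    linear_combination (9*mm a) * h2

lemma psi_eq_outer_pos (a : ℝ) {ξ : ℝ} (h : 2*mm a ≤ ξ) : Psi a ξ = phi a ξ := by
  unfold Psi
  rcases lt_or_eq_of_le h with h' | h'
  · rw [if_neg (by linarith)]
  · rw [← h', if_pos le_rfl, if_pos (by nlinarith [mm_nonneg a])]
    rw [show -(2*mm a)/2 = -(mm a) by ring]
    exact phi_junction1 a
  
lemma psi_eq_outer_neg (a : ℝ) {ξ : ℝ} (h : ξ ≤ -(2*mm a)) : Psi a ξ = phi a ξ := by
  unfold Psi
  rcases lt_or_eq_of_le h with h' | h'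
  · rw [if_pos (by nlinarith [mm_nonneg a]), if_neg (by linarith)]
  · rw [if_pos (by nlinarith [mm_nonneg a]), if_pos (by rw [h'])]
    rw [h', show -(-(2*mm a))/2 = mm a by ring]
    exact phi_junction2 a

lemma psi_eq_mid (a : ℝ) {ξ : ℝ} (h1 : -(2*mm a) ≤ ξ) (h2 : ξ ≤ 2*mm a) :
    Psi a ξ = phi a (-ξ/2) := by
  unfold Psi
  rw [if_pos h2, if_pos h1]








lemma phi_lr (a : ℝ) : phi a (-(2*mm a)) ≤ phi a (2*mm a) := by
  rcases mm_cases a with ⟨h, hm⟩ | ⟨h, hm⟩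
  · rw [hm]; simp [phi]
  · have h2 : (mm a)^2 = -a/3 := Real.sq_sqrt (by linarith)
    simp only [phi]
    nlinarith [mm_nonneg a]

lemma qR (a : ℝ) {x y : ℝ} (hx : 2*mm a ≤ x) (hxy : x < y) : phi a x < phi a y := by
  have ha := mm_sq_le a
  have hm := mm_nonneg a
  have key : 0 < x^2 + x*y + y^2 + a := by nlinarith [sq_nonneg (x+y), sq_nonneg (x-y)]
  simp only [phi]
  nlinarith [mul_pos (sub_pos.2 hxy) key]

lemma qL (a : ℝ) {x y : ℝ} (hxy : x < y) (hy : y ≤ -(2*mm a)) : phi a x < phi a y := by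
  have ha := mm_sq_le a
  have hm := mm_nonneg a
  have key : 0 < x^2 + x*y + y^2 + a := by nlinarith [sq_nonneg (x+y), sq_nonneg (x-y)]
  simp only [phi]
  nlinarith [mul_pos (sub_pos.2 hxy) key]

lemma qM (a : ℝ) {x y : ℝ} (hx : -(2*mm a) ≤ x) (hxy : x < y) (hy : y ≤ 2*mm a) :
    phi a (-x/2) < phi a (-y/2) := by
  have hmpos : 0 < mm a := by linarith
  have ham : a = -3*(mm a)^2 := by
    rcases mm_cases a with ⟨_, hm⟩ | ⟨_, hm⟩
    · exfalso; rw [hm] at hmpos; exact lt_irrefl 0 hmpos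
    · exact hm
  have key : x^2 + x*y + y^2 + 4*a < 0 := by
    nlinarith [mul_nonneg (by linarith : (0:ℝ) ≤ 2*mm a - y) (by linarith : (0:ℝ) ≤ 2*mm a + y),
      mul_nonneg (by linarith : (0:ℝ) ≤ 2*mm a - x) (by linarith : (0:ℝ) ≤ 2*mm a + x),
      mul_nonneg (by linarith : (0:ℝ) ≤ 2*mm a - y) (by linarith : (0:ℝ) ≤ 2*mm a + x),
      mul_pos hmpos (sub_pos.2 hxy)]
  simp only [phi]
  nlinarith [mul_pos (sub_pos.2 hxy) (by linarith : 0 < -(x^2 + x*y + y^2 + 4*a))]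

lemma psi_strictMono (a : ℝ) : StrictMono (Psi a) := by
  intro x y hxy
  rcases lt_or_ge x (-(2*mm a)) with hx | hx
  · rw [psi_eq_outer_neg a hx.le]
    rcases le_or_gt y (-(2*mm a)) with hy | hy
    · rw [psi_eq_outer_neg a hy]; exact qL a hxy hy
    · have step1 : phi a x < phi a (-(2*mm a)) := qL a hx le_rfl
      rcases le_or_gt y (2*mm a) with hy2 | hy2
      · rw [psi_eq_mid a hy.le hy2]
        have hq := qM a (le_refl (-(2*mm a))) hy hy2
        rw [show -(-(2*mm a))/2 = mm a by ring] at hq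
        calc phi a x < phi a (-(2*mm a)) := step1
          _ = phi a (mm a) := (phi_junction2 a).symm
          _ < phi a (-y/2) := hq
      · rw [psi_eq_outer_pos a hy2.le]
        calc phi a x < phi a (-(2*mm a)) := step1
          _ ≤ phi a (2*mm a) := phi_lr a
          _ < phi a y := qR a le_rfl hy2
  · rcases le_or_gt x (2*mm a) with hx2 | hx2
    · rw [psi_eq_mid a hx hx2]
      rcases le_or_gt y (2*mm a) with hy2 | hy2
      · rw [psi_eq_mid a (by linarith) hy2]; exact qM a hx hxy hy2
      · rw [psi_eq_outer_pos a hy2.le]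
        have step2 : phi a (-x/2) ≤ phi a (-(mm a)) := by
          rcases eq_or_lt_of_le hx2 with he | hlt
          · rw [he]; rw [show -(2*mm a)/2 = -(mm a) by ring]
          · have := qM a hx hlt le_rfl
            rw [show -(2*mm a)/2 = -(mm a) by ring] at this
            exact this.le
        calc phi a (-x/2) ≤ phi a (-(mm a)) := step2
          _ = phi a (2*mm a) := phi_junction1 a
          _ < phi a y := qR a le_rfl hy2
    · rw [psi_eq_outer_pos a hx2.le, psi_eq_outer_pos a (by linarith : 2*mm a ≤ y)]
      exact qR a hx2.le hxy

lemma phi_cont (a : ℝ) : Continuous (phi a) := by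
  unfold phi; fun_prop

lemma psi_continuous (a : ℝ) : Continuous (Psi a) := by
  unfold Psi
  apply Continuous.if_le
  · apply Continuous.if_le
    · exact (phi_cont a).comp (by fun_prop)
    · exact phi_cont a
    · exact continuous_const
    · exact continuous_id
    · intro ξ h
      rw [← h, show -(-(2*mm a))/2 = mm a by ring]
      exact phi_junction2 a
  · exact phi_cont a
  · exact continuous_id
  · exact continuous_const
  · intro ξ h
    rw [h, if_pos (by nlinarith [mm_nonneg a] : -(2*mm a) ≤ 2*mm a),
      show -(2*mm a)/2 = -(mm a) by ring]
    exact phi_junction1 a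

lemma psi_surjective (a : ℝ) : Function.Surjective (Psi a) := by
  intro θ
  set M := max (2*mm a) (1 + |a| + |θ|) with hMd
  have h1 : 1 + |a| + |θ| ≤ M := le_max_right _ _
  have h2m : 2*mm a ≤ M := le_max_left _ _
  have hM1 : 1 ≤ M := by
    have := abs_nonneg a; have := abs_nonneg θ; linarith
  have e0 : M ≤ M^2 := by nlinarith
  have e1 : 1 + |θ| ≤ M^2 + a := by linarith [neg_abs_le a]
  have e2 : M*(1+|θ|) ≤ M*(M^2+a) := mul_le_mul_of_nonneg_left e1 (by linarith)
  have e3 : 1 + |θ| ≤ M^3 + a*M := by nlinarith [abs_nonneg θ]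
  have hub : θ ≤ Psi a M := by
    rw [psi_eq_outer_pos a h2m]
    simp only [phi]
    nlinarith [le_abs_self θ]
  have hlb : Psi a (-M) ≤ θ := by
    rw [psi_eq_outer_neg a (by linarith [mm_nonneg a] : -M ≤ -(2*mm a))]
    simp only [phi]
    nlinarith [neg_abs_le θ]
  have hsub := intermediate_value_Icc (by linarith : -M ≤ M) (psi_continuous a).continuousOn
  obtain ⟨x, _, hx⟩ := hsub ⟨hlb, hub⟩
  exact ⟨x, hx⟩

noncomputable def Kiso (a : ℝ) : ℝ ≃o ℝ :=
  StrictMono.orderIsoOfSurjective _ (psi_strictMono a) (psi_surjective a)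

noncomputable def Kf (a θ : ℝ) : ℝ := (Kiso a).symm θ

lemma psi_Kf (a θ : ℝ) : Psi a (Kf a θ) = θ := by
  have := (Kiso a).apply_symm_apply θ
  rwa [Kiso, StrictMono.coe_orderIsoOfSurjective] at this

lemma Kf_psi (a x : ℝ) : Kf a (Psi a x) = x := by
  have h : Psi a (Kf a (Psi a x)) = Psi a x := psi_Kf a (Psi a x)
  exact (psi_strictMono a).injective h

lemma Kf_continuous (a : ℝ) : Continuous (Kf a) :=
  OrderIso.continuous (Kiso a).symm

lemma Kf_mono (a : ℝ) : StrictMono (Kf a) := (Kiso a).symm.strictMono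

lemma psi_odd (a ξ : ℝ) : Psi a (-ξ) = -Psi a ξ := by
  rcases lt_or_ge (2*mm a) ξ with h | h
  · rw [psi_eq_outer_pos a h.le, psi_eq_outer_neg a (by linarith : -ξ ≤ -(2*mm a))]
    simp only [phi]; ring
  rcases lt_or_ge ξ (-(2*mm a)) with h2 | h2
  · rw [psi_eq_outer_neg a h2.le, psi_eq_outer_pos a (by linarith : 2*mm a ≤ -ξ)]
    simp only [phi]; ring
  · rw [psi_eq_mid a h2 h, psi_eq_mid a (by linarith) (by linarith)]
    simp only [phi]; ring

lemma Kf_odd (a θ : ℝ) : Kf a (-θ) = -(Kf a θ) := by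
  have h1 : Psi a (-(Kf a θ)) = -θ := by
    rw [psi_odd a (Kf a θ), psi_Kf]
  rw [← h1, Kf_psi]




/-- Every depressed cubic over ℂ factors, with Vieta relations built in. -/
lemma cubic_factor (c₁ c₀ : ℂ) :
    ∃ r₁ r₂ r₃ : ℂ, r₁ + r₂ + r₃ = 0 ∧ r₁*r₂ + r₁*r₃ + r₂*r₃ = c₁ ∧ r₁*r₂*r₃ = -c₀ ∧
      ∀ z : ℂ, z^3 + c₁*z + c₀ = (z - r₁) * (z - r₂) * (z - r₃) := by
  have hdeg : (0 : WithBot ℕ) < (X^3 + C c₁ * X + C c₀ : ℂ[X]).degree := by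
    have : (X^3 + C c₁ * X + C c₀ : ℂ[X]).degree = 3 := by
      compute_degree!
    rw [this]; norm_num
  obtain ⟨r₁, hr₁⟩ := Complex.exists_root hdeg
  have hr : r₁^3 + c₁*r₁ + c₀ = 0 := by
    have := hr₁
    simp [IsRoot, eval_add, eval_mul, eval_pow] at this
    linear_combination this
  obtain ⟨s, hs⟩ := IsAlgClosed.exists_pow_nat_eq (-3*r₁^2 - 4*c₁) (n := 2) (by norm_num)
  refine ⟨r₁, (-r₁+s)/2, (-r₁-s)/2, by ring, ?_, ?_, ?_⟩
  · linear_combination (-1/4 : ℂ) * hs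
  · linear_combination (-r₁/4) * hs + hr
  · intro z
    linear_combination ((z-r₁)/4) * hs + hr




lemma core {u v : ℂ} {a ε θ : ℝ} (hu : u.re < 0) (hv : v.re < 0) (hε : 0 < ε)
    (h2 : u*v - (u+v)^2 = -(a:ℂ)) (h3 : u*v*(u+v) = (ε:ℂ) + (θ:ℂ)*Complex.I) : False := by
  have h2' := congrArg Complex.im h2
  have h3' := congrArg Complex.re h3
  set x1 := u.re with hx1d; set y1 := u.im; set x2 := v.re; set y2 := v.im
  simp only [pow_two, Complex.mul_im, Complex.mul_re, Complex.add_re, Complex.add_im,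
    Complex.sub_im, Complex.sub_re, Complex.neg_im, Complex.neg_re, Complex.ofReal_im,
    Complex.ofReal_re, Complex.I_re, Complex.I_im] at h2' h3'
  have hc : 2*x1*y1 + x1*y2 + x2*y1 + 2*x2*y2 = 0 := by linear_combination -h2'
  have hP : (x1*x2 - y1*y2)*(x1+x2) - (x1*y2+x2*y1)*(y1+y2) = ε := by linear_combination h3'
  have key : ε*(x1+2*x2)^2 = (x1+x2)*x1*x2*((x1+2*x2)^2+9*y1^2) := by
    linear_combination (-4*y1*x2^2 - 2*x1*x2*y2 - 5*x1*y1*x2 - x1^2*y2) * hc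
      - (x1+2*x2)^2 * hP
  have hDneg : x1 + 2*x2 < 0 := by linarith
  have hD : 0 < (x1+2*x2)^2 := by nlinarith
  have h1 : 0 < x1*x2 := mul_pos_of_neg_of_neg hu hv
  have hsneg : 0 < -(x1+x2) := by linarith
  nlinarith [mul_pos hε hD, mul_pos (mul_pos h1 hD) hsneg,
    mul_nonneg (mul_nonneg h1.le (sq_nonneg y1)) hsneg.le]






lemma exists_unique_neg_root (a ε θ : ℝ) (hε : 0 < ε) :
    ∃! z : ℂ, z^3 - (a:ℂ)*z + ((ε:ℂ) + (θ:ℂ)*Complex.I) = 0 ∧ z.re < 0 := by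
  obtain ⟨r₁, r₂, r₃, h1, h2, h3, hfac⟩ :=
    cubic_factor (-(a:ℂ)) ((ε:ℂ) + (θ:ℂ)*Complex.I)
  have hfac' : ∀ z : ℂ, z^3 - (a:ℂ)*z + ((ε:ℂ) + (θ:ℂ)*Complex.I)
      = (z - r₁) * (z - r₂) * (z - r₃) := by
    intro z; linear_combination hfac z
  -- each rᵢ is a root
  have hroot : ∀ r : ℂ, r = r₁ ∨ r = r₂ ∨ r = r₃ →
      r^3 - (a:ℂ)*r + ((ε:ℂ) + (θ:ℂ)*Complex.I) = 0 := by
    intro r hr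
    rw [hfac' r]
    rcases hr with h | h | h <;> rw [h] <;> ring
  -- no root has zero real part
  have no_axis : ∀ z : ℂ, z^3 - (a:ℂ)*z + ((ε:ℂ) + (θ:ℂ)*Complex.I) = 0 → z.re ≠ 0 := by
    intro z hz h0
    have h := congrArg Complex.re hz
    simp only [pow_succ, pow_zero, one_mul, Complex.mul_re, Complex.mul_im, Complex.add_re,
      Complex.sub_re, Complex.ofReal_re, Complex.ofReal_im, Complex.I_re, Complex.I_im,
      Complex.zero_re] at h
    rw [h0] at h
    nlinarith [h]
  -- membership of any root
  have mem : ∀ z : ℂ, z^3 - (a:ℂ)*z + ((ε:ℂ) + (θ:ℂ)*Complex.I) = 0 →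
      z = r₁ ∨ z = r₂ ∨ z = r₃ := by
    intro z hz
    have : (z - r₁) * (z - r₂) * (z - r₃) = 0 := by rw [← hfac' z]; exact hz
    rcases mul_eq_zero.1 this with h | h
    · rcases mul_eq_zero.1 h with h | h
      · exact Or.inl (sub_eq_zero.1 h)
      · exact Or.inr (Or.inl (sub_eq_zero.1 h))
    · exact Or.inr (Or.inr (sub_eq_zero.1 h))
  -- pairwise Vieta facts
  have e2_12 : r₁*r₂ - (r₁+r₂)^2 = -(a:ℂ) := by linear_combination h2 - (r₁+r₂)*h1
  have e2_13 : r₁*r₃ - (r₁+r₃)^2 = -(a:ℂ) := by linear_combination h2 - (r₁+r₃)*h1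
  have e2_23 : r₂*r₃ - (r₂+r₃)^2 = -(a:ℂ) := by linear_combination h2 - (r₂+r₃)*h1
  have e3_12 : r₁*r₂*(r₁+r₂) = (ε:ℂ) + (θ:ℂ)*Complex.I := by
    linear_combination -h3 + r₁*r₂*h1
  have e3_13 : r₁*r₃*(r₁+r₃) = (ε:ℂ) + (θ:ℂ)*Complex.I := by
    linear_combination -h3 + r₁*r₃*h1
  have e3_23 : r₂*r₃*(r₂+r₃) = (ε:ℂ) + (θ:ℂ)*Complex.I := by
    linear_combination -h3 + r₂*r₃*h1
  -- existence
  have hsum : r₁.re + r₂.re + r₃.re = 0 := by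
    have := congrArg Complex.re h1
    simpa using this
  have hne1 : r₁.re ≠ 0 := no_axis r₁ (hroot r₁ (Or.inl rfl))
  have hne2 : r₂.re ≠ 0 := no_axis r₂ (hroot r₂ (Or.inr (Or.inl rfl)))
  have hne3 : r₃.re ≠ 0 := no_axis r₃ (hroot r₃ (Or.inr (Or.inr rfl)))
  have hex : ∃ r : ℂ, (r = r₁ ∨ r = r₂ ∨ r = r₃) ∧ r.re < 0 := by
    by_contra hcon
    push_neg at hcon
    have p1 : 0 < r₁.re := lt_of_le_of_ne (hcon r₁ (Or.inl rfl)) (Ne.symm hne1)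
    have p2 : 0 < r₂.re := lt_of_le_of_ne (hcon r₂ (Or.inr (Or.inl rfl))) (Ne.symm hne2)
    have p3 : 0 < r₃.re := lt_of_le_of_ne (hcon r₃ (Or.inr (Or.inr rfl))) (Ne.symm hne3)
    linarith
  obtain ⟨r, hrmem, hrneg⟩ := hex
  refine ⟨r, ⟨hroot r hrmem, hrneg⟩, ?_⟩
  rintro z ⟨hz, hzneg⟩
  by_contra hne
  have hzmem := mem z hz
  -- z and r are distinct members of {r₁,r₂,r₃} with negative real parts
  have pairs : False := by
    rcases hzmem with hz1 | hz2 | hz3 <;> rcases hrmem with hr1 | hr2 | hr3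
    · exact hne (hz1.trans hr1.symm)
    · exact core (hz1 ▸ hzneg) (hr2 ▸ hrneg) hε e2_12 e3_12
    · exact core (hz1 ▸ hzneg) (hr3 ▸ hrneg) hε e2_13 e3_13
    · exact core (hr1 ▸ hrneg) (hz2 ▸ hzneg) hε e2_12 e3_12
    · exact hne (hz2.trans hr2.symm)
    · exact core (hz2 ▸ hzneg) (hr3 ▸ hrneg) hε e2_23 e3_23
    · exact core (hr1 ▸ hrneg) (hz3 ▸ hzneg) hε e2_13 e3_13
    · exact core (hr2 ▸ hrneg) (hz3 ▸ hzneg) hε e2_23 e3_23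
    · exact hne (hz3.trans hr3.symm)
  exact pairs





noncomputable def r0 (a θ : ℝ) : ℂ :=
  Complex.ofReal (-(Real.sqrt (3*(Kf a θ)^2 + 4*a))/2)
    + Complex.ofReal (-(Kf a θ)/2) * Complex.I

lemma r0_re (a θ : ℝ) : (r0 a θ).re = -(Real.sqrt (3*(Kf a θ)^2 + 4*a))/2 := by
  simp [r0]

lemma r0_im (a θ : ℝ) : (r0 a θ).im = -(Kf a θ)/2 := by
  simp [r0]

lemma r0_continuous (a : ℝ) : Continuous (fun θ => r0 a θ) := by
  unfold r0
  apply Continuous.add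
  · apply Complex.continuous_ofReal.comp
    apply Continuous.div_const
    apply Continuous.neg
    apply Real.continuous_sqrt.comp
    exact ((continuous_const.mul ((Kf_continuous a).pow 2)).add continuous_const)
  · apply Continuous.mul _ continuous_const
    apply Complex.continuous_ofReal.comp
    exact ((Kf_continuous a).neg.div_const 2)

lemma r0_conj (a θ : ℝ) : r0 a (-θ) = (starRingEnd ℂ) (r0 a θ) := by
  apply Complex.ext
  · rw [Complex.conj_re, r0_re, r0_re, Kf_odd]
    ring_nf
  · rw [Complex.conj_im, r0_im, r0_im, Kf_odd]
    ring

/-- Roots of the limiting cubic on the imaginary axis coming from a real root `w` of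
`w³+aw=θ` with `3w²+a > 0` repel the negative-real-part roots. -/
lemma exclusion (a θ w : ℝ) (hw : w^3 + a*w = θ) (hA : 0 < 3*w^2 + a) :
    ∃ δ : ℝ, 0 < δ ∧ ∀ ε : ℝ, 0 < ε → ∀ z : ℂ,
      z^3 - (a:ℂ)*z + ((ε:ℂ) + (θ:ℂ)*Complex.I) = 0 → z.re < 0 →
      δ ≤ ‖z - (w:ℂ)*Complex.I‖ := by
  set A := 3*w^2 + a with hAd
  have hden : 0 < 3*|w|+1 := by positivity
  refine ⟨min 1 (A/(2*(3*|w|+1))), lt_min one_pos (by positivity), ?_⟩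
  intro ε hε z hz hzre
  by_contra hcon
  push_neg at hcon
  set η : ℂ := -Complex.I * z - (w:ℂ) with hηd
  have hηabs : ‖η‖ = ‖z - (w:ℂ)*Complex.I‖ := by
    have h : η = -Complex.I * (z - (w:ℂ)*Complex.I) := by
      rw [hηd]; ring_nf; rw [Complex.I_sq]; ring
    rw [h, norm_mul]
    simp
  have hδ1 : ‖η‖ < 1 := by
    rw [hηabs]; exact lt_of_lt_of_le hcon (min_le_left _ _)
  have hδ2 : ‖η‖ < A/(2*(3*|w|+1)) := by
    rw [hηabs]; exact lt_of_lt_of_le hcon (min_le_right _ _)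
  have hηnn := norm_nonneg η
  set B : ℂ := 3*(w:ℂ)^2 + (a:ℂ) + 3*(w:ℂ)*η + η^2 with hBd
  have hwc : (w:ℂ)^3 + (a:ℝ)*(w:ℂ) = (θ:ℂ) := by
    exact_mod_cast congrArg (Complex.ofReal) hw
  have hB : η * B = -Complex.I * (ε:ℂ) := by
    rw [hBd, hηd]
    linear_combination Complex.I * hz - hwc + (-(θ:ℂ) - Complex.I * z^3) * Complex.I_sq
  -- bound the perturbation part of B
  have habs : ‖3*(w:ℂ)*η + η^2‖ ≤ (3*|w|+1) * ‖η‖ := by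
    calc ‖3*(w:ℂ)*η + η^2‖
        ≤ ‖3*(w:ℂ)*η‖ + ‖η^2‖ := norm_add_le _ _
      _ = 3*|w| * ‖η‖ + ‖η‖ * ‖η‖ := by
          rw [norm_mul, norm_pow]
          simp [Complex.norm_real, abs_of_nonneg]
          ring
      _ ≤ 3*|w| * ‖η‖ + 1 * ‖η‖ := by
          have := mul_le_mul_of_nonneg_right hδ1.le hηnn
          nlinarith
      _ = (3*|w|+1) * ‖η‖ := by ring
  have hpert : ‖3*(w:ℂ)*η + η^2‖ ≤ A/2 := by
    have h2 : (3*|w|+1) * ‖η‖ ≤ (3*|w|+1) * (A/(2*(3*|w|+1))) :=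
      mul_le_mul_of_nonneg_left hδ2.le hden.le
    have h3 : (3*|w|+1) * (A/(2*(3*|w|+1))) = A/2 := by field_simp
    linarith
  have hBre : A/2 ≤ B.re := by
    have h1 : |(3*(w:ℂ)*η + η^2).re| ≤ ‖3*(w:ℂ)*η + η^2‖ :=
      Complex.abs_re_le_norm _
    have hsplit : B = ((A:ℝ):ℂ) + (3*(w:ℂ)*η + η^2) := by
      rw [hBd, hAd]; push_cast; ring
    have h2 : B.re = A + (3*(w:ℂ)*η + η^2).re := by
      rw [hsplit, Complex.add_re, Complex.ofReal_re]
    have := abs_le.1 h1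
    linarith [this.1]
  have hBne : B ≠ 0 := by
    intro h
    rw [h] at hBre
    simp at hBre
    linarith
  have hηval : η = -Complex.I * (ε:ℂ) / B := by
    field_simp
    linear_combination hB
  have hηim : η.im < 0 := by
    rw [hηval, Complex.div_im]
    have hnormSq : 0 < Complex.normSq B := Complex.normSq_pos.2 hBne
    have h1 : (-Complex.I * (ε:ℂ)).im = -ε := by simp
    have h2 : (-Complex.I * (ε:ℂ)).re = 0 := by simp
    rw [h1, h2]
    have : 0 < ε * B.re := by nlinarith
    have hq : ε * B.re / Complex.normSq B > 0 := div_pos this hnormSq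
    simp only [zero_mul, zero_div, sub_zero]
    rw [neg_mul, neg_div]
    linarith [hq]
  have hηim2 : η.im = -z.re := by
    rw [hηd]
    simp [Complex.sub_im, Complex.mul_im]
  linarith [hηim, hηim2, hzre]






/-- Abstract convergence: if the limiting cubic factors with roots `ρ₁,ρ₂,ρ₃` and the
negative-real-part roots stay away from `ρ₂, ρ₃`, then every branch converges to `ρ₁`. -/
lemma tendsto_of_triple (a θ : ℝ) (ρ₁ ρ₂ ρ₃ : ℂ)
    (hfac : ∀ z : ℂ, z^3 - (a:ℂ)*z + (θ:ℂ)*Complex.I = (z - ρ₁)*(z - ρ₂)*(z - ρ₃))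
    (h2 : ρ₂ = ρ₁ ∨ ∃ δ : ℝ, 0 < δ ∧ ∀ ε : ℝ, 0 < ε → ∀ z : ℂ,
        z^3 - (a:ℂ)*z + ((ε:ℂ) + (θ:ℂ)*Complex.I) = 0 → z.re < 0 →
        δ ≤ ‖z - ρ₂‖)
    (h3 : ρ₃ = ρ₁ ∨ ∃ δ : ℝ, 0 < δ ∧ ∀ ε : ℝ, 0 < ε → ∀ z : ℂ,
        z^3 - (a:ℂ)*z + ((ε:ℂ) + (θ:ℂ)*Complex.I) = 0 → z.re < 0 →
        δ ≤ ‖z - ρ₃‖) :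
    ∀ Z : ℝ → ℂ,
      (∀ ε : ℝ, 0 < ε →
        (Z ε)^3 - (a:ℂ)*(Z ε) + ((ε:ℂ) + (θ:ℂ)*Complex.I) = 0 ∧ (Z ε).re < 0) →
      Tendsto Z (𝓝[>] (0:ℝ)) (𝓝 ρ₁) := by
  intro Z hZ
  refine Metric.tendsto_nhds.2 (fun δ hδ => ?_)
  obtain ⟨δ₂, hδ₂, hexc₂⟩ : ∃ δ₂ : ℝ, 0 < δ₂ ∧ ∀ ε : ℝ, 0 < ε → ∀ z : ℂ,
      z^3 - (a:ℂ)*z + ((ε:ℂ) + (θ:ℂ)*Complex.I) = 0 → z.re < 0 →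
      ‖z - ρ₂‖ < δ₂ → ‖z - ρ₁‖ < δ := by
    rcases h2 with h | ⟨δ', hδ', h⟩
    · exact ⟨δ, hδ, fun ε hε z hz hzn hlt => h ▸ hlt⟩
    · refine ⟨δ', hδ', fun ε hε z hz hzn hlt => absurd (h ε hε z hz hzn) (by linarith)⟩
  obtain ⟨δ₃, hδ₃, hexc₃⟩ : ∃ δ₃ : ℝ, 0 < δ₃ ∧ ∀ ε : ℝ, 0 < ε → ∀ z : ℂ,
      z^3 - (a:ℂ)*z + ((ε:ℂ) + (θ:ℂ)*Complex.I) = 0 → z.re < 0 →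
      ‖z - ρ₃‖ < δ₃ → ‖z - ρ₁‖ < δ := by
    rcases h3 with h | ⟨δ', hδ', h⟩
    · exact ⟨δ, hδ, fun ε hε z hz hzn hlt => h ▸ hlt⟩
    · refine ⟨δ', hδ', fun ε hε z hz hzn hlt => absurd (h ε hε z hz hzn) (by linarith)⟩
  set δ' := min δ (min δ₂ δ₃) with hδ'd
  have hδ'pos : 0 < δ' := lt_min hδ (lt_min hδ₂ hδ₃)
  have hmem : Set.Ioo (0:ℝ) (δ'^3) ∈ 𝓝[>] (0:ℝ) :=
    Ioo_mem_nhdsGT_of_mem ⟨le_refl 0, by positivity⟩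
  filter_upwards [hmem] with ε hε
  obtain ⟨hz, hzn⟩ := hZ ε hε.1
  set z := Z ε with hzd
  have hprodC : (z - ρ₁)*(z - ρ₂)*(z - ρ₃) = -(ε:ℂ) := by
    linear_combination hz - hfac z
  have hprod : ‖z - ρ₁‖ * ‖z - ρ₂‖ * ‖z - ρ₃‖ = ε := by
    rw [← norm_mul, ← norm_mul, hprodC, norm_neg, Complex.norm_real, Real.norm_eq_abs,
      abs_of_pos hε.1]
  have hone : ‖z - ρ₁‖ < δ' ∨ ‖z - ρ₂‖ < δ'
      ∨ ‖z - ρ₃‖ < δ' := by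
    by_contra hcon
    push_neg at hcon
    obtain ⟨c1, c2, c3⟩ := hcon
    have h1 := norm_nonneg (z - ρ₁)
    have h2 := norm_nonneg (z - ρ₂)
    have h3 := norm_nonneg (z - ρ₃)
    nlinarith [hε.2, mul_le_mul (mul_le_mul c1 c2 hδ'pos.le h1) c3 hδ'pos.le
      (mul_nonneg h1 h2)]
  have hres : ‖z - ρ₁‖ < δ := by
    rcases hone with h | h | h
    · exact lt_of_lt_of_le h (min_le_left _ _)
    · exact hexc₂ ε hε.1 z hz hzn (lt_of_lt_of_le h ((min_le_right _ _).trans (min_le_left _ _)))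
    · exact hexc₃ ε hε.1 z hz hzn (lt_of_lt_of_le h ((min_le_right _ _).trans (min_le_right _ _)))
  rw [Complex.dist_eq]
  exact hres





lemma phi_Kf (a θ : ℝ) (h : 2*mm a ≤ |Kf a θ|) : phi a (Kf a θ) = θ := by
  rcases le_abs.mp h with h' | h'
  · rw [← psi_eq_outer_pos a h', psi_Kf]
  · rw [← psi_eq_outer_neg a (by linarith : Kf a θ ≤ -(2*mm a)), psi_Kf]

set_option maxHeartbeats 1000000 in
lemma tendsto_r0 (a θ : ℝ) :
    ∀ Z : ℝ → ℂ,
      (∀ ε : ℝ, 0 < ε →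
        (Z ε)^3 - (a:ℂ)*(Z ε) + ((ε:ℂ) + (θ:ℂ)*Complex.I) = 0 ∧ (Z ε).re < 0) →
      Tendsto Z (𝓝[>] (0:ℝ)) (𝓝 (r0 a θ)) := by
  by_cases hout : 2*mm a ≤ |Kf a θ|
  · -- outer case
    have hφ : (Kf a θ)^3 + a*(Kf a θ) = θ := phi_Kf a θ hout
    set K := Kf a θ with hKd
    have hK2 : (2*mm a)^2 ≤ K^2 := by
      rw [← sq_abs K]
      exact pow_le_pow_left₀ (by linarith [mm_nonneg a]) hout 2
    have hT : 0 ≤ 3*K^2 + 4*a := by nlinarith [mm_sq_le a]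
    set s := Real.sqrt (3*K^2 + 4*a) with hsd
    have hs : s^2 = 3*K^2 + 4*a := Real.sq_sqrt hT
    have hsnn : 0 ≤ s := Real.sqrt_nonneg _
    set E : ℂ := Complex.ofReal (-s/2) + Complex.ofReal (-K/2) * Complex.I with hEd
    set ρ₂ : ℂ := Complex.ofReal (s/2) + Complex.ofReal (-K/2) * Complex.I with hρ₂d
    set ρ₃ : ℂ := (K:ℂ) * Complex.I with hρ₃d
    have hE : r0 a θ = E := by
      apply Complex.ext
      · rw [r0_re, hEd, ← hKd]
        simp [hsd]
      · rw [r0_im, hEd, ← hKd]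
        simp
    have hφc : (K:ℂ)^3 + (a:ℂ)*(K:ℂ) = (θ:ℂ) := by exact_mod_cast congrArg Complex.ofReal hφ
    have hsc : (s:ℂ)^2 = 3*(K:ℂ)^2 + 4*(a:ℂ) := by exact_mod_cast congrArg Complex.ofReal hs
    have hfac : ∀ z : ℂ, z^3 - (a:ℂ)*z + (θ:ℂ)*Complex.I = (z - E)*(z - ρ₂)*(z - ρ₃) := by
      intro z
      rw [hEd, hρ₂d, hρ₃d]
      push_cast
      linear_combination (-Complex.I)*hφc + (z/4 - Complex.I*(K:ℂ)/4)*hsc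
        + (3*z*(K:ℂ)^2/4 + Complex.I*(K:ℂ)^3/4)*Complex.I_sq
    have h2 : ρ₂ = E ∨ ∃ δ : ℝ, 0 < δ ∧ ∀ ε : ℝ, 0 < ε → ∀ z : ℂ,
        z^3 - (a:ℂ)*z + ((ε:ℂ) + (θ:ℂ)*Complex.I) = 0 → z.re < 0 →
        δ ≤ ‖z - ρ₂‖ := by
      by_cases hs0 : s = 0
      · left; rw [hρ₂d, hEd, hs0]; norm_num
      · right
        have hspos : 0 < s := lt_of_le_of_ne hsnn (Ne.symm hs0)
        refine ⟨s/2, by positivity, fun ε hε z hz hzre => ?_⟩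
        by_contra hlt
        push_neg at hlt
        have hre : (z - ρ₂).re = z.re - s/2 := by
          rw [hρ₂d]; simp
        have habs := Complex.abs_re_le_norm (z - ρ₂)
        rw [hre] at habs
        have := abs_lt.mp (lt_of_le_of_lt habs hlt)
        linarith [this.1]
    have h3 : ρ₃ = E ∨ ∃ δ : ℝ, 0 < δ ∧ ∀ ε : ℝ, 0 < ε → ∀ z : ℂ,
        z^3 - (a:ℂ)*z + ((ε:ℂ) + (θ:ℂ)*Complex.I) = 0 → z.re < 0 →
        δ ≤ ‖z - ρ₃‖ := by
      by_cases hA : 0 < 3*K^2 + a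
      · right; exact exclusion a θ K hφ hA
      · left
        push_neg at hA
        have hK0 : K = 0 := by nlinarith
        have ha0 : a = 0 := by nlinarith
        have hs0 : s = 0 := by rw [hsd, hK0, ha0]; norm_num
        rw [hρ₃d, hEd, hK0, hs0]; norm_num
    rw [hE]
    exact tendsto_of_triple a θ E ρ₂ ρ₃ hfac h2 h3
  · -- inner case
    push_neg at hout
    have hm : 0 < mm a := by
      by_contra h
      push_neg at h
      have h0 : mm a = 0 := le_antisymm h (mm_nonneg a)
      rw [h0] at hout
      have := abs_nonneg (Kf a θ)
      linarith
    have ham : a = -3*(mm a)^2 := by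
      rcases mm_cases a with ⟨_, h⟩ | ⟨_, h⟩
      · rw [h] at hm; exact absurd hm (lt_irrefl 0)
      · exact h
    have habsK : |Kf a θ| < 2*mm a := hout
    have hKl : -(2*mm a) ≤ Kf a θ := by
      have := abs_lt.mp habsK; linarith [this.1]
    have hKr : Kf a θ ≤ 2*mm a := (abs_lt.mp habsK).2.le
    have hmid : phi a (-(Kf a θ)/2) = θ := by
      rw [← psi_eq_mid a hKl hKr, psi_Kf]
    set K := Kf a θ with hKd
    set q : ℝ := -K/2 with hqd
    simp only [phi] at hmid
    have hq : q^3 + a*q = θ := hmid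
    have hq2 : q^2 < (mm a)^2 := by
      have := (abs_lt.mp habsK)
      nlinarith [this.1, this.2]
    have hql : q < mm a := by nlinarith
    have hqr : -(mm a) < q := by nlinarith
    have h4a : 0 ≤ -4*a - 3*q^2 := by nlinarith
    set s := Real.sqrt (-4*a - 3*q^2) with hsd
    have hs : s^2 = -4*a - 3*q^2 := Real.sq_sqrt h4a
    have hsnn : 0 ≤ s := Real.sqrt_nonneg _
    have hs3m : 3*mm a < s := by
      by_contra hcon
      push_neg at hcon
      have h1 : s^2 ≤ (3*mm a)^2 := by nlinarith
      nlinarith [hq2]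
    clear_value K q s
    set wp : ℝ := (-q+s)/2 with hwpd
    set wm : ℝ := (-q-s)/2 with hwmd
    clear_value wp wm
    have hwp : wp^3 + a*wp = θ := by
      rw [hwpd]; linear_combination hq + ((s - 3*q)/8)*hs
    have hwm : wm^3 + a*wm = θ := by
      rw [hwmd]; linear_combination hq + ((-s - 3*q)/8)*hs
    have hwpm : mm a < wp := by rw [hwpd]; linarith
    have hwmm : wm < -(mm a) := by rw [hwmd]; linarith
    have hwp2 : (mm a)^2 < wp^2 := by nlinarith [hwpm, hm]
    have hwm2 : (mm a)^2 < wm^2 := by nlinarith [hwmm, hm]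
    have hAp : 0 < 3*wp^2 + a := by linarith [hwp2]
    have hAm : 0 < 3*wm^2 + a := by linarith [hwm2]
    have hE : r0 a θ = (q:ℂ) * Complex.I := by
      apply Complex.ext
      · rw [r0_re]
        have hKq : K = -2*q := by rw [hqd]; ring
        have hK2q : K^2 = 4*q^2 := by rw [hKq]; ring
        have hneg : 3*K^2 + 4*a ≤ 0 := by linarith [hq2, hK2q]
        have h0 : Real.sqrt (3*K^2 + 4*a) = 0 := Real.sqrt_eq_zero'.mpr hneg
        rw [← hKd, h0]
        simp
      · rw [r0_im]
        simp [hqd, hKd]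
    have hqc : (q:ℂ)^3 + (a:ℂ)*(q:ℂ) = (θ:ℂ) := by exact_mod_cast congrArg Complex.ofReal hq
    have hsc : (s:ℂ)^2 = -4*(a:ℂ) - 3*(q:ℂ)^2 := by exact_mod_cast congrArg Complex.ofReal hs
    have hfac : ∀ z : ℂ, z^3 - (a:ℂ)*z + (θ:ℂ)*Complex.I
        = (z - (q:ℂ)*Complex.I)*(z - (wp:ℂ)*Complex.I)*(z - (wm:ℂ)*Complex.I) := by
      intro z
      rw [hwpd, hwmd]
      push_cast
      linear_combination (-Complex.I)*hqc + (-z/4 + Complex.I*(q:ℂ)/4)*hsc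
        + (z*(s:ℂ)^2/4 + 3*z*(q:ℂ)^2/4 - Complex.I*(q:ℂ)*(s:ℂ)^2/4 + Complex.I*(q:ℂ)^3/4)*Complex.I_sq
    rw [hE]
    refine tendsto_of_triple a θ ((q:ℂ)*Complex.I) ((wp:ℂ)*Complex.I) ((wm:ℂ)*Complex.I)
      hfac (Or.inr (exclusion a θ wp hwp hAp)) (Or.inr (exclusion a θ wm hwm hAm))






lemma psi_at_2m (a : ℝ) : Psi a (2*mm a) = 2*(mm a)^3 := by
  rw [psi_eq_mid a (by linarith [mm_nonneg a]) le_rfl]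
  rcases mm_cases a with ⟨_, hm⟩ | ⟨_, hm⟩
  · rw [hm]; simp [phi]
  · simp only [phi]
    rw [show -(2*mm a)/2 = -(mm a) by ring]
    linear_combination (-(mm a))*hm

lemma psi_at_neg2m (a : ℝ) : Psi a (-(2*mm a)) = -(2*(mm a)^3) := by
  rw [psi_eq_mid a le_rfl (by linarith [mm_nonneg a])]
  rcases mm_cases a with ⟨_, hm⟩ | ⟨_, hm⟩
  · rw [hm]; simp [phi]
  · simp only [phi]
    rw [show -(-(2*mm a))/2 = mm a by ring]
    linear_combination (mm a)*hm

lemma Kf_ge (a θ : ℝ) (h : 2*(mm a)^3 ≤ θ) : 2*mm a ≤ Kf a θ := by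
  have h1 : Kf a (Psi a (2*mm a)) ≤ Kf a θ := by
    apply (Kf_mono a).monotone
    rw [psi_at_2m]; exact h
  rwa [Kf_psi] at h1

lemma Kf_le (a θ : ℝ) (h : θ ≤ -(2*(mm a)^3)) : Kf a θ ≤ -(2*mm a) := by
  have h1 : Kf a θ ≤ Kf a (Psi a (-(2*mm a))) := by
    apply (Kf_mono a).monotone
    rw [psi_at_neg2m]; exact h
  rwa [Kf_psi] at h1

lemma Kf_inner (a θ : ℝ) (h : |θ| < 2*(mm a)^3) : |Kf a θ| < 2*mm a := by
  have h1 := abs_lt.mp h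
  have h2 : Kf a θ < Kf a (Psi a (2*mm a)) := by
    apply Kf_mono a
    rw [psi_at_2m]; exact h1.2
  have h3 : Kf a (Psi a (-(2*mm a))) < Kf a θ := by
    apply Kf_mono a
    rw [psi_at_neg2m]; exact h1.1
  rw [Kf_psi] at h2 h3
  exact abs_lt.mpr ⟨h3, h2⟩

lemma Kf_abs_le (a θ : ℝ) : |Kf a θ| ≤ 2*|θ|^((1:ℝ)/3) + 2*Real.sqrt |a| := by
  have hrnn : (0:ℝ) ≤ |θ|^((1:ℝ)/3) := Real.rpow_nonneg (abs_nonneg θ) _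
  have hsnn : (0:ℝ) ≤ Real.sqrt |a| := Real.sqrt_nonneg _
  by_cases hout : 2*mm a ≤ |Kf a θ|
  · set K := Kf a θ with hKd
    have hφ : K^3 + a*K = θ := phi_Kf a θ hout
    by_cases hbig : K^2 ≤ 2*|a|
    · have h1 : |K| ≤ Real.sqrt (2*|a|) := by
        rw [← Real.sqrt_sq_eq_abs]
        exact Real.sqrt_le_sqrt hbig
      have h2 : Real.sqrt (2*|a|) ≤ 2*Real.sqrt |a| := by
        rw [show (2:ℝ)*Real.sqrt |a| = Real.sqrt 4 * Real.sqrt |a| by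
          rw [show (4:ℝ) = 2^2 by norm_num, Real.sqrt_sq (by norm_num)]]
        rw [← Real.sqrt_mul (by norm_num)]
        exact Real.sqrt_le_sqrt (by linarith [abs_nonneg a])
      linarith
    · push_neg at hbig
      have hK3 : |K|^3 ≤ 2*|θ| := by
        have h1 : |θ| = |K^3 + a*K| := by rw [hφ]
        have h2 : |K|^3 - |a| * |K| ≤ |θ| := by
          rw [h1]
          have h3 := abs_sub_abs_le_abs_sub (K^3) (-(a*K))
          rw [sub_neg_eq_add, abs_neg, abs_pow, abs_mul] at h3
          linarith
        have h4 : |a| * |K| ≤ (|K|^2/2) * |K| := by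
          apply mul_le_mul_of_nonneg_right _ (abs_nonneg K)
          nlinarith [sq_abs K]
        have h5 : (|K|^2/2) * |K| = |K|^3/2 := by ring
        linarith
      have h6 : |K| ≤ (2*|θ|)^((1:ℝ)/3) := by
        have h7 : (|K|^(3:ℕ):ℝ)^((1:ℝ)/3) ≤ (2*|θ|)^((1:ℝ)/3) :=
          Real.rpow_le_rpow (by positivity) (by exact_mod_cast hK3) (by norm_num)
        rwa [← Real.rpow_natCast |K| 3, ← Real.rpow_mul (abs_nonneg K),
          show ((3:ℕ):ℝ) * ((1:ℝ)/3) = 1 by norm_num, Real.rpow_one] at h7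
      have h8 : (2*|θ|)^((1:ℝ)/3) = 2^((1:ℝ)/3) * |θ|^((1:ℝ)/3) :=
        Real.mul_rpow (by norm_num) (abs_nonneg θ)
      have h9 : (2:ℝ)^((1:ℝ)/3) ≤ 2 := by
        calc (2:ℝ)^((1:ℝ)/3) ≤ 2^(1:ℝ) :=
              Real.rpow_le_rpow_of_exponent_le (by norm_num) (by norm_num)
          _ = 2 := Real.rpow_one 2
      have h10 : 2^((1:ℝ)/3) * |θ|^((1:ℝ)/3) ≤ 2 * |θ|^((1:ℝ)/3) :=
        mul_le_mul_of_nonneg_right h9 hrnn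
      linarith
  · push_neg at hout
    have hma : mm a ≤ Real.sqrt |a| := by
      apply Real.sqrt_le_sqrt
      rcases abs_cases a with ⟨h1, _⟩ | ⟨h1, _⟩ <;> nlinarith [abs_nonneg a]
    linarith

lemma r0_abs_le (a θ : ℝ) :
    ‖r0 a θ‖ ≤ 2*|θ|^((1:ℝ)/3) + 3*Real.sqrt |a| := by
  set K := Kf a θ with hKd
  have hsq : ‖r0 a θ‖^2
      = (Real.sqrt (3*K^2 + 4*a))^2/4 + K^2/4 := by
    rw [Complex.sq_norm, Complex.normSq_apply, r0_re, r0_im, ← hKd]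
    ring
  have h1 : (Real.sqrt (3*K^2 + 4*a))^2 ≤ 3*K^2 + 4*|a| := by
    rcases le_or_gt 0 (3*K^2 + 4*a) with h | h
    · rw [Real.sq_sqrt h]
      linarith [le_abs_self a]
    · rw [Real.sqrt_eq_zero'.mpr h.le]
      nlinarith [sq_nonneg K, abs_nonneg a]
  have h2 : ‖r0 a θ‖^2 ≤ (|K| + Real.sqrt |a|)^2 := by
    rw [hsq]
    have h3 : K^2 = |K|^2 := (sq_abs K).symm
    nlinarith [Real.sq_sqrt (abs_nonneg a), mul_nonneg (abs_nonneg K) (Real.sqrt_nonneg |a|)]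
  have h4 : ‖r0 a θ‖ ≤ |K| + Real.sqrt |a| := by
    have h5 := Real.sqrt_le_sqrt h2
    rwa [Real.sqrt_sq (norm_nonneg _),
      Real.sqrt_sq (by positivity)] at h5
  have h6 := Kf_abs_le a θ
  rw [← hKd] at h6
  linarith






/-- Real-part bound in the case `a ≥ 0`. -/
lemma r0_re_le_nonneg (a θ : ℝ) (ha : 0 ≤ a) :
    (r0 a θ).re ≤ -(1/4)*(|θ|^((1:ℝ)/3) + Real.sqrt a) := by
  have hm0 : mm a = 0 := by
    rcases mm_cases a with ⟨_, h⟩ | ⟨h, h2⟩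
    · exact h
    · nlinarith [mm_nonneg a, mm_sq_le a, sq_nonneg (mm a)]
  have hout : 2*mm a ≤ |Kf a θ| := by rw [hm0]; simpa using abs_nonneg _
  set K := Kf a θ with hKd
  have hφ : K^3 + a*K = θ := phi_Kf a θ hout
  set X := 3*K^2 + 4*a with hXd
  have hXnn : 0 ≤ X := by positivity
  set S := Real.sqrt X with hSd
  have hS2 : S^2 = X := Real.sq_sqrt hXnn
  have hSnn : 0 ≤ S := Real.sqrt_nonneg _
  have hsa : Real.sqrt a ≤ S := by
    rw [hSd]; exact Real.sqrt_le_sqrt (by nlinarith)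
  have hKS : |K| ≤ S := by
    rw [hSd, ← Real.sqrt_sq_eq_abs]
    exact Real.sqrt_le_sqrt (by nlinarith)
  have hθS : |θ| ≤ S^3 := by
    have h1 : |θ| ≤ |K|^3 + a*|K| := by
      rw [← hφ]
      have h2 := abs_add_le (K^3) (a*K)
      rw [abs_pow, abs_mul, abs_of_nonneg ha] at h2
      exact h2
    have h3 : S^3 = X*S := by rw [pow_succ, hS2, mul_comm]
    have h4 : X*|K| ≤ X*S := mul_le_mul_of_nonneg_left hKS hXnn
    have h5 : |K|^3 + a*|K| ≤ X*|K| := by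
      rw [hXd]
      nlinarith [abs_nonneg K, sq_abs K, pow_le_pow_left₀ (abs_nonneg K) (le_refl |K|) 3]
    linarith
  have hθ13 : |θ|^((1:ℝ)/3) ≤ S := by
    have h1 : (|θ|:ℝ)^((1:ℝ)/3) ≤ ((S^(3:ℕ)):ℝ)^((1:ℝ)/3) :=
      Real.rpow_le_rpow (abs_nonneg θ) (by exact_mod_cast hθS) (by norm_num)
    rwa [← Real.rpow_natCast S 3, ← Real.rpow_mul hSnn,
      show ((3:ℕ):ℝ) * ((1:ℝ)/3) = 1 by norm_num, Real.rpow_one] at h1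
  rw [r0_re, ← hKd, ← hXd, ← hSd]
  linarith

/-- Real-part bound in the outer region when `a < 0`. -/
lemma r0_re_le_outer (a θ ξ : ℝ) (ha : a < 0) (hθ : 2*(mm a)^3 ≤ |θ|)
    (hξ : mm a ≤ |ξ|) (hφξ : ξ^3 + a*ξ = θ) :
    (r0 a θ).re ≤ -(1/4)*(|ξ| - 2*mm a) := by
  have hm : 0 < mm a := Real.sqrt_pos.mpr (by linarith)
  have ham : a = -3*(mm a)^2 := by
    rcases mm_cases a with ⟨h, _⟩ | ⟨_, h⟩
    · linarith
    · exact h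
  have hout : 2*mm a ≤ |Kf a θ| := by
    rcases le_abs.mp hθ with h | h
    · have := Kf_ge a θ h
      calc 2*mm a ≤ Kf a θ := this
        _ ≤ |Kf a θ| := le_abs_self _
    · have := Kf_le a θ (by linarith)
      calc 2*mm a ≤ -(Kf a θ) := by linarith
        _ ≤ |Kf a θ| := neg_le_abs _
  set K := Kf a θ with hKd
  have hφ : K^3 + a*K = θ := phi_Kf a θ hout
  set X := 3*K^2 + 4*a with hXd
  have hK2 : (2*mm a)^2 ≤ K^2 := by
    rw [← sq_abs K]
    exact pow_le_pow_left₀ (by linarith) hout 2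
  have hXnn : 0 ≤ X := by rw [hXd]; nlinarith
  set S := Real.sqrt X with hSd
  have hSnn : 0 ≤ S := Real.sqrt_nonneg _
  have hre : (r0 a θ).re = -S/2 := by rw [r0_re, ← hKd, ← hXd, ← hSd]
  rcases le_or_gt |ξ| (2*mm a) with hcase | hcase
  · rw [hre]; nlinarith
  · -- show ξ = K
    have hne : ξ = K := by
      by_contra hne
      have hfac : (ξ - K)*(ξ^2 + ξ*K + K^2 + a) = 0 := by
        linear_combination hφξ - hφ
      have h2 : ξ^2 + ξ*K + K^2 + a = 0 := by
        rcases mul_eq_zero.mp hfac with h | h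
        · exact absurd (sub_eq_zero.mp h) hne
        · exact h
      have hξ2 : (2*mm a)^2 < ξ^2 := by
        rw [← sq_abs ξ]
        have := mm_nonneg a
        nlinarith
      nlinarith [sq_nonneg (2*ξ + K), hK2, hξ2, h2, hm]
    rw [hne] at hcase ⊢
    have hgeS : |K| - 2*mm a ≤ S := by
      have h1 : (|K| - 2*mm a)^2 ≤ X := by
        rw [hXd]
        nlinarith [sq_abs K, hK2, hcase, hm]
      calc |K| - 2*mm a = Real.sqrt ((|K| - 2*mm a)^2) :=
            (Real.sqrt_sq (by linarith)).symm
        _ ≤ Real.sqrt X := Real.sqrt_le_sqrt h1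
        _ = S := by rw [hSd]
    rw [hre]
    linarith

/-- Inner region when `a < 0`. -/
lemma r0_inner (a θ : ℝ) (ha : a < 0) (hθ : |θ| < 2*(mm a)^3) :
    (r0 a θ).re = 0 ∧ |(r0 a θ).im| ≤ mm a ∧
      (r0 a θ).im^3 + a*(r0 a θ).im = θ := by
  have hm : 0 < mm a := Real.sqrt_pos.mpr (by linarith)
  have ham : a = -3*(mm a)^2 := by
    rcases mm_cases a with ⟨h, _⟩ | ⟨_, h⟩
    · linarith
    · exact h
  have hin : |Kf a θ| < 2*mm a := Kf_inner a θ hθ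
  have habs := abs_lt.mp hin
  have hmid : phi a (-(Kf a θ)/2) = θ := by
    rw [← psi_eq_mid a (by linarith [habs.1]) habs.2.le, psi_Kf]
  simp only [phi] at hmid
  have hK2 : (Kf a θ)^2 < (2*mm a)^2 := by
    rw [← sq_abs (Kf a θ)]
    nlinarith [abs_nonneg (Kf a θ)]
  refine ⟨?_, ?_, ?_⟩
  · rw [r0_re]
    have hneg : 3*(Kf a θ)^2 + 4*a ≤ 0 := by nlinarith
    rw [Real.sqrt_eq_zero'.mpr hneg]
    norm_num
  · rw [r0_im]
    have h1 : |(-(Kf a θ)/2)| = |Kf a θ|/2 := by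
      rw [abs_div, abs_neg]; norm_num
    rw [h1]; linarith
  · rw [r0_im]
    exact hmid


end S13

end Statement13Aux

/-- Lemma 2.5: behaviour of the root `z₀(p)` with negative real part of
`z³ - (λ - b)z + p = 0` as `Re p → 0⁺`: existence and properties of the limit
`r₀(θ) = p(θ) + i q(θ)`, with absolute constants `c, c₀ > 0`. -/
theorem statement13 :
    ∃ c : ℝ, 0 < c ∧ ∃ c₀ : ℝ, 0 < c₀ ∧
      ∀ b lam : ℝ, 0 ≤ lam →
        (∀ ε θ : ℝ, 0 < ε →
          ∃! z : ℂ, z^3 - ((lam - b : ℝ) : ℂ) * z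
              + (((ε : ℝ) : ℂ) + ((θ : ℝ) : ℂ) * Complex.I) = 0 ∧ z.re < 0) ∧
        ∃ r₀ : ℝ → ℂ, Continuous r₀ ∧
          (∀ θ : ℝ, ∀ Z : ℝ → ℂ,
            (∀ ε : ℝ, 0 < ε →
              (Z ε)^3 - ((lam - b : ℝ) : ℂ) * Z ε
                  + (((ε : ℝ) : ℂ) + ((θ : ℝ) : ℂ) * Complex.I) = 0 ∧ (Z ε).re < 0) →
            Tendsto Z (𝓝[>] (0:ℝ)) (𝓝 (r₀ θ))) ∧
          (∀ θ : ℝ, r₀ (-θ) = (starRingEnd ℂ) (r₀ θ)) ∧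
          (∀ θ : ℝ, ‖r₀ θ‖
              ≤ c * (|θ| ^ ((1:ℝ)/3) + Real.sqrt lam + Real.sqrt |b|)) ∧
          (b ≤ lam → ∀ θ : ℝ,
            (r₀ θ).re ≤ -c₀ * (|θ| ^ ((1:ℝ)/3) + Real.sqrt (lam - b))) ∧
          (lam < b →
            (∀ θ ξ : ℝ, 2 * ((b - lam)/3) ^ ((3:ℝ)/2) ≤ |θ| →
              Real.sqrt ((b - lam)/3) ≤ |ξ| → ξ^3 - (b - lam) * ξ = θ →
              (r₀ θ).re ≤ -c₀ * (|ξ| - 2 * Real.sqrt ((b - lam)/3))) ∧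
            (∀ θ : ℝ, |θ| < 2 * ((b - lam)/3) ^ ((3:ℝ)/2) →
              (r₀ θ).re = 0 ∧ |(r₀ θ).im| ≤ Real.sqrt ((b - lam)/3) ∧
                (r₀ θ).im ^ 3 - (b - lam) * (r₀ θ).im = θ)) := by
  refine ⟨3, by norm_num, 1/4, by norm_num, fun b lam hlam => ?_⟩
  set a := lam - b with had
  constructor
  · intro ε θ hε
    exact S13.exists_unique_neg_root a ε θ hε
  refine ⟨fun θ => S13.r0 a θ, S13.r0_continuous a, ?_, ?_, ?_, ?_, ?_⟩
  · intro θ Z hZ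
    exact S13.tendsto_r0 a θ Z hZ
  · intro θ
    exact S13.r0_conj a θ
  · intro θ
    have h0 := S13.r0_abs_le a θ
    have h1 : |a| ≤ lam + |b| := by
      rw [had]
      rcases abs_cases (lam - b) with ⟨h, _⟩ | ⟨h, _⟩ <;>
        [skip; skip] <;> rw [h] <;> linarith [le_abs_self b, neg_abs_le b]
    have h2 : Real.sqrt |a| ≤ Real.sqrt lam + Real.sqrt |b| := by
      have h3 : Real.sqrt |a| ≤ Real.sqrt (lam + |b|) := Real.sqrt_le_sqrt h1
      have h5 : lam + |b| ≤ (Real.sqrt lam + Real.sqrt |b|)^2 := by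
        nlinarith [Real.sq_sqrt hlam, Real.sq_sqrt (abs_nonneg b),
          mul_nonneg (Real.sqrt_nonneg lam) (Real.sqrt_nonneg |b|)]
      have h4 : Real.sqrt (lam + |b|) ≤ Real.sqrt lam + Real.sqrt |b| := by
        calc Real.sqrt (lam + |b|) ≤ Real.sqrt ((Real.sqrt lam + Real.sqrt |b|)^2) :=
              Real.sqrt_le_sqrt h5
          _ = Real.sqrt lam + Real.sqrt |b| := Real.sqrt_sq (by positivity)
      linarith
    have hθnn : (0:ℝ) ≤ |θ| ^ ((1:ℝ)/3) := Real.rpow_nonneg (abs_nonneg θ) _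
    linarith
  · intro hble θ
    have := S13.r0_re_le_nonneg a θ (by rw [had]; linarith)
    calc (S13.r0 a θ).re ≤ -(1/4)*(|θ| ^ ((1:ℝ)/3) + Real.sqrt a) := this
      _ = -(1/4) * (|θ| ^ ((1:ℝ)/3) + Real.sqrt (lam - b)) := by rw [← had]
  · intro hltb
    have ha : a < 0 := by rw [had]; linarith
    have hmm : S13.mm a = Real.sqrt ((b - lam)/3) := by
      rw [S13.mm, had]
      congr 1
      ring
    have hx : (0:ℝ) ≤ (b - lam)/3 := by linarith
    have hcube : (S13.mm a)^3 = ((b - lam)/3) ^ ((3:ℝ)/2) := by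
      rw [hmm, Real.sqrt_eq_rpow]
      rw [← Real.rpow_natCast (((b - lam)/3) ^ ((1:ℝ)/2)) 3, ← Real.rpow_mul hx]
      norm_num
    constructor
    · intro θ ξ hθ hξ hφ
      have hθ' : 2*(S13.mm a)^3 ≤ |θ| := by rw [hcube]; exact hθ
      have hξ' : S13.mm a ≤ |ξ| := by rw [hmm]; exact hξ
      have hφ' : ξ^3 + a*ξ = θ := by rw [had]; linear_combination hφ
      have := S13.r0_re_le_outer a θ ξ ha hθ' hξ' hφ'
      calc (S13.r0 a θ).re ≤ -(1/4)*(|ξ| - 2*S13.mm a) := this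
        _ = -(1/4) * (|ξ| - 2 * Real.sqrt ((b - lam)/3)) := by rw [hmm]
    · intro θ hθ
      have hθ' : |θ| < 2*(S13.mm a)^3 := by rw [hcube]; exact hθ
      obtain ⟨h1, h2, h3⟩ := S13.r0_inner a θ ha hθ'
      refine ⟨h1, ?_, ?_⟩
      · rw [← hmm]; exact h2
      · rw [had] at h3 ⊢
        linear_combination h3


end ZK
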